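/- Let L, ν be natural numbers, h ∈ ℂ^L, f ∈ ℂ^{ν+1}, and N0 > 0. Then J(F) := 1 + (1/2π)∫_{−π}^{π}[log(1+|F(ω)|²) + M(ω)·(1+|F(ω)|²)] dω ≤ (1/2π)∫_{−π}^{π} log(1+|H(ω)|²/N0) dω; that is, the Forney-model channel shortener's information rate without feedback, for any target response F, is at most the Shannon capacity 𝒞 of the ISI channel. -/

import Mathlib

open Complex Real MeasureTheory

/-- DTFT of the channel taps `h ∈ ℂ^L`. -/
noncomputable def Hdtft {L : ℕ} (h : Fin L → ℂ) (ω : ℝ) : ℂ :=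
  ∑ ℓ : Fin L, h ℓ * Complex.exp (Complex.I * (ω : ℂ) * ((ℓ : ℕ) : ℂ))

/-- DTFT of the target-response taps `f ∈ ℂ^{ν+1}`. -/
noncomputable def Fdtft {ν : ℕ} (f : Fin (ν + 1) → ℂ) (ω : ℝ) : ℂ :=
  ∑ k : Fin (ν + 1), f k * Complex.exp (Complex.I * (ω : ℂ) * ((k : ℕ) : ℂ))

/-- The LMMSE kernel `M(ω) = −N0/(N0+|H(ω)|²)`. -/
noncomputable def Mker (N0 : ℝ) (H : ℝ → ℂ) (ω : ℝ) : ℝ :=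
  -N0 / (N0 + ‖H ω‖ ^ 2)

/-! Pointwise, with `t = N0/(N0+|H|²)` and `a = 1+|F|²`, the integrand is `log a − t a`, and
`log (t a) ≤ t a − 1` gives `log a − t a ≤ −log t − 1 = log (1+|H|²/N0) − 1`. Integrating over
`[−π, π]` and dividing by `2π` turns the `−1` into the leading `1` of `J(F)`. -/

lemma log_sub_mul_le_neg_log_sub_one {a t : ℝ} (ha : 0 < a) (ht : 0 < t) :
    Real.log a - t * a ≤ -Real.log t - 1 := by
  have := Real.log_le_sub_one_of_pos (mul_pos ht ha)
  rw [Real.log_mul ht.ne' ha.ne'] at this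
  linarith

lemma log_one_add_add_mker_le {N0 x y : ℝ} (hN0 : 0 < N0) (hx : 0 ≤ x) (hy : 0 ≤ y) :
    Real.log (1 + x) + -N0 / (N0 + y) * (1 + x) ≤ Real.log (1 + y / N0) - 1 := by
  have hNy : 0 < N0 + y := by positivity
  have hlog : Real.log (1 + y / N0) = -Real.log (N0 / (N0 + y)) := by
    rw [← Real.log_inv, inv_div, add_div, div_self hN0.ne']
  rw [hlog, neg_div, neg_mul, ← sub_eq_add_neg]
  exact log_sub_mul_le_neg_log_sub_one (by positivity) (by positivity)

lemma continuous_Hdtft {L : ℕ} (h : Fin L → ℂ) : Continuous (Hdtft h) := by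
  unfold Hdtft; fun_prop

lemma continuous_Fdtft {ν : ℕ} (f : Fin (ν + 1) → ℂ) : Continuous (Fdtft f) := by
  unfold Fdtft; fun_prop

lemma intervalIntegral.mul_add_integral_le_of_add_le {f g : ℝ → ℝ} {a b c : ℝ} (hab : a ≤ b)
    (hf : IntervalIntegrable f volume a b) (hg : IntervalIntegrable g volume a b)
    (hfg : ∀ x ∈ Set.Icc a b, f x + c ≤ g x) :
    (b - a) * c + ∫ x in a..b, f x ≤ ∫ x in a..b, g x := by
  have := integral_mono_on hab (hf.add intervalIntegrable_const) hg hfg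
  rwa [integral_add hf intervalIntegrable_const, integral_const, smul_eq_mul, add_comm] at this

/-- `I_FOM^0 ≤ 𝒞`: the Forney-model channel shortener's rate without feedback, for
any target response `F`, is at most the Shannon capacity of the ISI channel. -/
theorem stmt10 (L ν : ℕ) (h : Fin L → ℂ) (f : Fin (ν + 1) → ℂ) (N0 : ℝ) (hN0 : 0 < N0) :
    1 + (1 / (2 * π)) *
        ∫ ω in (-π)..π,
          (Real.log (1 + ‖Fdtft f ω‖ ^ 2) +
            Mker N0 (Hdtft h) ω * (1 + ‖Fdtft f ω‖ ^ 2)) ≤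
      (1 / (2 * π)) *
        ∫ ω in (-π)..π, Real.log (1 + ‖Hdtft h ω‖ ^ 2 / N0) := by
  have hH := continuous_Hdtft h
  have hF := continuous_Fdtft f
  have hJ : Continuous fun ω => Real.log (1 + ‖Fdtft f ω‖ ^ 2) +
      Mker N0 (Hdtft h) ω * (1 + ‖Fdtft f ω‖ ^ 2) := by
    unfold Mker
    fun_prop (disch := intro; positivity)
  have hCap : Continuous fun ω => Real.log (1 + ‖Hdtft h ω‖ ^ 2 / N0) := by
    fun_prop (disch := intro; positivity)
  have hle := intervalIntegral.mul_add_integral_le_of_add_le (c := 1) (by linarith [pi_pos])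
    (hJ.intervalIntegrable (-π) π) (hCap.intervalIntegrable (-π) π) fun ω _ => by
      have := log_one_add_add_mker_le hN0 (sq_nonneg ‖Fdtft f ω‖) (sq_nonneg ‖Hdtft h ω‖)
      rw [Mker]; linarith
  calc _ = 1 / (2 * π) * ((π - -π) * 1 + ∫ ω in (-π)..π,
          (Real.log (1 + ‖Fdtft f ω‖ ^ 2) + Mker N0 (Hdtft h) ω * (1 + ‖Fdtft f ω‖ ^ 2))) := by
        field_simp; ring
    _ ≤ _ := by gcongr
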